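/- arXiv:2202.00639 — 3 statements merged into one kernel-verified Lean document; each statement's English description precedes it below -/
import Mathlib

section
/- Let S(n,m) denote the minimum cardinality of the support over all n × m doubly stochastic matrices with uniform marginals. Then for all integers 1 < n ≤ m, S(n,m) = n + m - gcd(n,m). -/
open Finset

def DS (n m : ℕ) (A : Matrix (Fin n) (Fin m) ℝ) : Prop :=
  (∀ i j, 0 ≤ A i j) ∧ (∀ j, ∑ i, A i j = (n : ℝ)) ∧ (∀ i, ∑ j, A i j = (m : ℝ))

noncomputable def supp {n m : ℕ} (A : Matrix (Fin n) (Fin m) ℝ) : Finset (Fin n × Fin m) :=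
  Finset.univ.filter fun p => A p.1 p.2 ≠ 0

noncomputable def S (n m : ℕ) : ℕ :=
  sInf {k | ∃ A : Matrix (Fin n) (Fin m) ℝ, DS n m A ∧ (supp A).card = k}

def IsExtremal {n m : ℕ} (M : Matrix (Fin n) (Fin m) ℝ) : Prop :=
  DS n m M ∧ ∀ (A B : Matrix (Fin n) (Fin m) ℝ) (t : ℝ), DS n m A → DS n m B →
    0 < t → t < 1 → M = t • A + (1 - t) • B → A = M ∧ B = M

/-!
Lower bound: in the bipartite support graph of `A` on rows ⊕ columns, every connected
component `C` is balanced, `#rows(C) * m = #cols(C) * n`, because the mass of `A` carried by the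
rows of `C` equals the mass carried by its columns. Hence `n / gcd n m` divides the number of rows
of each component, so there are at most `gcd n m` components, and a graph has at least
`#vertices - #components` edges.

Upper bound: cut `[0, n m)` into `n` blocks of length `m` and into `m` blocks of length `n`, and
let entry `(i, j)` be the overlap of the `i`-th block of the first kind with the `j`-th of the
second. Its support is indexed by the left endpoints of the nonempty overlaps, which are exactly
the multiples of `m` or of `n` below `n m`: there are `n + m - gcd n m` of them.
-/

namespace SimpleGraph

variable {V : Type*}

theorem card_le_card_edgeSet_add_card_connectedComponent [Finite V] (G : SimpleGraph V) :
    Nat.card V ≤ Nat.card G.edgeSet + Nat.card G.ConnectedComponent := by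
  have := Fintype.ofFinite G.ConnectedComponent
  let f : (Σ C : G.ConnectedComponent, C.toSimpleGraph.edgeSet) → G.edgeSet :=
    fun e => e.1.toSimpleGraph_hom.mapEdgeSet e.2
  have hf : Function.Injective f := by
    rintro ⟨C, e⟩ ⟨C', e'⟩ h
    obtain rfl : C = C' := by
      have hval : Sym2.map Subtype.val e.1 = Sym2.map Subtype.val e'.1 := congrArg Subtype.val h
      have hmem : (e.1.out.1 : V) ∈ Sym2.map Subtype.val e'.1 := by
        rw [← hval]
        exact Sym2.mem_map.2 ⟨_, Sym2.out_fst_mem _, rfl⟩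
      obtain ⟨u, -, hu⟩ := Sym2.mem_map.1 hmem
      exact ConnectedComponent.eq_of_common_vertex (e.1.out.1).2 (hu ▸ u.2)
    exact congrArg (Sigma.mk C) (Hom.mapEdgeSet.injective _ (fun _ _ => Subtype.ext) h)
  calc Nat.card V = ∑ C : G.ConnectedComponent, Nat.card C := by
        rw [← Nat.card_sigma]
        exact Nat.card_congr (Equiv.sigmaFiberEquiv G.connectedComponentMk).symm
    _ ≤ ∑ C : G.ConnectedComponent, (Nat.card C.toSimpleGraph.edgeSet + 1) :=
        Finset.sum_le_sum fun C _ => C.connected_toSimpleGraph.card_vert_le_card_edgeSet_add_one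
    _ = Nat.card (Σ C : G.ConnectedComponent, C.toSimpleGraph.edgeSet) +
          Nat.card G.ConnectedComponent := by
        rw [Finset.sum_add_distrib, Nat.card_sigma, Nat.card_eq_fintype_card]
        simp
    _ ≤ Nat.card G.edgeSet + Nat.card G.ConnectedComponent := by
        gcongr
        exact Nat.card_le_card_of_injective f hf

end SimpleGraph

namespace Matrix

variable {ι κ α : Type*}

theorem sum_row_sums_eq_sum_col_sums [Fintype ι] [Fintype κ] [AddCommMonoid α]
    (A : Matrix ι κ α) {R : Finset ι} {K : Finset κ}
    (hRK : ∀ i j, A i j ≠ 0 → (i ∈ R ↔ j ∈ K)) :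
    ∑ i ∈ R, ∑ j, A i j = ∑ j ∈ K, ∑ i, A i j :=
  calc ∑ i ∈ R, ∑ j, A i j = ∑ i ∈ R, ∑ j ∈ K, A i j :=
        sum_congr rfl fun i hi => (sum_subset (subset_univ K) fun j _ hj =>
          by_contra fun h => hj ((hRK i j h).1 hi)).symm
    _ = ∑ j ∈ K, ∑ i ∈ R, A i j := sum_comm
    _ = ∑ j ∈ K, ∑ i, A i j :=
        sum_congr rfl fun j hj => sum_subset (subset_univ R) fun i _ hi =>
          by_contra fun h => hi ((hRK i j h).2 hj)

def supportGraph [Zero α] (A : Matrix ι κ α) : SimpleGraph (ι ⊕ κ) :=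
  SimpleGraph.fromRel fun x y => ∃ i j, x = .inl i ∧ y = .inr j ∧ A i j ≠ 0

theorem connectedComponentMk_supportGraph_inl_eq [Zero α] {A : Matrix ι κ α} {i : ι} {j : κ}
    (h : A i j ≠ 0) :
    A.supportGraph.connectedComponentMk (.inl i) = A.supportGraph.connectedComponentMk (.inr j) :=
  SimpleGraph.ConnectedComponent.connectedComponentMk_eq_of_adj <|
    (SimpleGraph.fromRel_adj _ _ _).2 ⟨Sum.inl_ne_inr, .inl ⟨i, j, rfl, rfl, h⟩⟩

theorem card_edgeSet_supportGraph_le_card_supp {n m : ℕ} (A : Matrix (Fin n) (Fin m) ℝ) :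
    Nat.card A.supportGraph.edgeSet ≤ #(supp A) := by
  let f : supp A → A.supportGraph.edgeSet := fun p =>
    ⟨s(.inl p.1.1, .inr p.1.2), A.supportGraph.mem_edgeSet.2 <|
      (SimpleGraph.fromRel_adj _ _ _).2
        ⟨Sum.inl_ne_inr, .inl ⟨_, _, rfl, rfl, (mem_filter.1 p.2).2⟩⟩⟩
  have hf : Function.Surjective f := by
    rintro ⟨e, he⟩
    induction e using Sym2.ind with
    | h x y =>
      obtain ⟨-, ⟨i, j, rfl, rfl, hij⟩ | ⟨i, j, rfl, rfl, hij⟩⟩ :=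
        (SimpleGraph.fromRel_adj _ _ _).1 (A.supportGraph.mem_edgeSet.1 he)
      · exact ⟨⟨(i, j), by simpa [supp] using hij⟩, rfl⟩
      · exact ⟨⟨(i, j), by simpa [supp] using hij⟩, Subtype.ext Sym2.eq_swap⟩
  simpa using Nat.card_le_card_of_surjective f hf

end Matrix

theorem Nat.div_gcd_dvd_of_mul_eq {a b n m : ℕ} (hn : 0 < n) (h : a * m = b * n) :
    n / n.gcd m ∣ a := by
  have hco := Nat.coprime_div_gcd_div_gcd (m := n) (n := m) (Nat.gcd_pos_of_pos_left m hn)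
  refine hco.dvd_of_dvd_mul_right ⟨b, ?_⟩
  rw [← Nat.mul_div_assoc _ (Nat.gcd_dvd_right n m), h,
    Nat.mul_div_assoc _ (Nat.gcd_dvd_left n m), mul_comm]

namespace DS

variable {n m : ℕ} {A : Matrix (Fin n) (Fin m) ℝ}

theorem card_mul_eq_of_closed (hA : DS n m A) {R : Finset (Fin n)} {K : Finset (Fin m)}
    (hRK : ∀ i j, A i j ≠ 0 → (i ∈ R ↔ j ∈ K)) : #R * m = #K * n := by
  have h := A.sum_row_sums_eq_sum_col_sums hRK
  simp only [hA.2.2, hA.2.1, sum_const, nsmul_eq_mul] at h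
  exact_mod_cast h

theorem exists_ne_zero (hA : DS n m A) (hn : 0 < n) (j : Fin m) : ∃ i, A i j ≠ 0 := by
  by_contra! h
  have := hA.2.1 j
  simp only [h, sum_const_zero] at this
  exact hn.ne (by exact_mod_cast this)

theorem card_connectedComponent_supportGraph_le_gcd (hA : DS n m A) (hn : 0 < n) :
    Nat.card A.supportGraph.ConnectedComponent ≤ n.gcd m := by
  classical
  set G := A.supportGraph
  let rows (C : G.ConnectedComponent) : Finset (Fin n) :=
    {i | G.connectedComponentMk (.inl i) = C}
  have hrows (C : G.ConnectedComponent) : n / n.gcd m ≤ #(rows C) := by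
    obtain ⟨v, rfl⟩ := C.exists_rep
    have hne : (rows (G.connectedComponentMk v)).Nonempty := by
      rcases v with i | j
      · exact ⟨i, by simp [rows]⟩
      · obtain ⟨i, hi⟩ := hA.exists_ne_zero hn j
        exact ⟨i, mem_filter.2
          ⟨mem_univ _, Matrix.connectedComponentMk_supportGraph_inl_eq hi⟩⟩
    have hbal := hA.card_mul_eq_of_closed (R := rows (G.connectedComponentMk v))
      (K := {j | G.connectedComponentMk (.inr j) = G.connectedComponentMk v})
      fun i j h => by
        simp only [rows, mem_filter, mem_univ, true_and]
        exact iff_of_eq (congrArg (· = _) (Matrix.connectedComponentMk_supportGraph_inl_eq h))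
    exact Nat.le_of_dvd hne.card_pos (Nat.div_gcd_dvd_of_mul_eq hn hbal)
  have hsum : ∑ C, #(rows C) = n := by
    rw [← card_eq_sum_card_fiberwise (fun i _ => mem_univ (G.connectedComponentMk (.inl i)))]
    simp
  have hle : Nat.card G.ConnectedComponent * (n / n.gcd m) ≤ n.gcd m * (n / n.gcd m) :=
    calc Nat.card G.ConnectedComponent * (n / n.gcd m) = ∑ _C, n / n.gcd m := by
          simp [Nat.card_eq_fintype_card]
      _ ≤ ∑ C, #(rows C) := sum_le_sum fun C _ => hrows C
      _ = n.gcd m * (n / n.gcd m) := by rw [hsum, Nat.mul_div_cancel' (Nat.gcd_dvd_left n m)]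
  exact Nat.le_of_mul_le_mul_right hle
    (Nat.div_pos (Nat.gcd_le_left m hn) (Nat.gcd_pos_of_pos_left m hn))

theorem le_card_supp (hA : DS n m A) (hn : 0 < n) : n + m - n.gcd m ≤ #(supp A) := by
  have hV := A.supportGraph.card_le_card_edgeSet_add_card_connectedComponent
  rw [Nat.card_sum, Nat.card_eq_fintype_card, Nat.card_eq_fintype_card, Fintype.card_fin,
    Fintype.card_fin] at hV
  have hE := A.card_edgeSet_supportGraph_le_card_supp
  have hC := hA.card_connectedComponent_supportGraph_le_gcd hn
  omega

end DS

theorem Nat.card_filter_dvd_range_mul {d : ℕ} (hd : 0 < d) (k : ℕ) :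
    #{x ∈ range (k * d) | d ∣ x} = k := by
  have : {x ∈ range (k * d) | d ∣ x} = (range k).image (· * d) := by
    ext x
    simp only [mem_filter, mem_range, mem_image]
    constructor
    · rintro ⟨hx, c, rfl⟩
      exact ⟨c, Nat.lt_of_mul_lt_mul_right (by rwa [mul_comm] at hx), mul_comm c d⟩
    · rintro ⟨c, hc, rfl⟩
      exact ⟨Nat.mul_lt_mul_of_pos_right hc hd, dvd_mul_left d c⟩
  rw [this, Finset.card_image_of_injective _ (mul_left_injective₀ hd.ne'), card_range]

theorem Nat.div_eq_of_div_mul_le_of_le {x y d : ℕ} (h₁ : x / d * d ≤ y) (h₂ : y ≤ x) :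
    y / d = x / d := by
  rcases Nat.eq_zero_or_pos d with rfl | hd
  · simp
  · exact le_antisymm (Nat.div_le_div_right h₂) ((Nat.le_div_iff_mul_le hd).2 h₁)

section Staircase

variable {n m : ℕ}

theorem card_filter_dvd_or_dvd_range (hn : 0 < n) (hm : 0 < m) :
    #{x ∈ range (n * m) | m ∣ x ∨ n ∣ x} = n + m - n.gcd m := by
  have hl : #{x ∈ range (n * m) | m ∣ x ∧ n ∣ x} = n.gcd m := by
    have : {x ∈ range (n * m) | m ∣ x ∧ n ∣ x} =
        {x ∈ range (n.gcd m * n.lcm m) | n.lcm m ∣ x} := by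
      rw [Nat.gcd_mul_lcm]
      exact filter_congr fun x _ => by rw [Nat.lcm_dvd_iff, and_comm]
    rw [this, Nat.card_filter_dvd_range_mul (Nat.lcm_pos hn hm)]
  have hn' : #{x ∈ range (n * m) | n ∣ x} = m := by
    rw [mul_comm]
    exact Nat.card_filter_dvd_range_mul hn m
  have hunion := card_union_add_card_inter {x ∈ range (n * m) | m ∣ x}
    {x ∈ range (n * m) | n ∣ x}
  rw [← filter_or, ← filter_and, hl, Nat.card_filter_dvd_range_mul hm, hn'] at hunion
  omega

def blockPair (n m x : ℕ) : ℕ × ℕ := (x / m, x / n)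

theorem injOn_blockPair : Set.InjOn (blockPair n m) {x | m ∣ x ∨ n ∣ x} := by
  suffices ∀ x y, x < y → (m ∣ y ∨ n ∣ y) → blockPair n m x ≠ blockPair n m y by
    intro x hx y hy hxy
    rcases lt_trichotomy x y with h | rfl | h
    · exact absurd hxy (this x y h hy)
    · rfl
    · exact absurd hxy.symm (this y x h hx)
  rintro x y hxy (h | h) heq <;> simp only [blockPair, Prod.ext_iff] at heq
  · exact (Nat.div_lt_div_of_lt_of_dvd h hxy).ne heq.1
  · exact (Nat.div_lt_div_of_lt_of_dvd h hxy).ne heq.2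

theorem image_blockPair_filter_dvd_or_dvd :
    {x ∈ range (n * m) | m ∣ x ∨ n ∣ x}.image (blockPair n m) =
      (range (n * m)).image (blockPair n m) := by
  refine Subset.antisymm (image_subset_image (filter_subset _ _)) ?_
  intro p hp
  obtain ⟨x, hx, rfl⟩ := mem_image.1 hp
  have h₁ : x / m * m ≤ max (x / m * m) (x / n * n) := le_max_left _ _
  have h₂ : x / n * n ≤ max (x / m * m) (x / n * n) := le_max_right _ _
  have hle : max (x / m * m) (x / n * n) ≤ x :=
    max_le (Nat.div_mul_le_self x m) (Nat.div_mul_le_self x n)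
  refine mem_image.2 ⟨max (x / m * m) (x / n * n), mem_filter.2 ⟨?_, ?_⟩, ?_⟩
  · exact mem_range.2 (hle.trans_lt (mem_range.1 hx))
  · rcases max_choice (x / m * m) (x / n * n) with h | h <;> rw [h]
    · exact .inl (dvd_mul_left m _)
    · exact .inr (dvd_mul_left n _)
  · simp only [blockPair, Nat.div_eq_of_div_mul_le_of_le h₁ hle,
      Nat.div_eq_of_div_mul_le_of_le h₂ hle]

theorem card_image_blockPair_range (hn : 0 < n) (hm : 0 < m) :
    #((range (n * m)).image (blockPair n m)) = n + m - n.gcd m := by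
  have hinj :
      Set.InjOn (blockPair n m) ({x ∈ range (n * m) | m ∣ x ∨ n ∣ x} : Finset ℕ) :=
    fun x hx y hy => injOn_blockPair (mem_filter.1 hx).2 (mem_filter.1 hy).2
  rw [← image_blockPair_filter_dvd_or_dvd, Finset.card_image_of_injOn hinj,
    card_filter_dvd_or_dvd_range hn hm]

def staircase (n m : ℕ) : Matrix (Fin n) (Fin m) ℕ :=
  fun i j => #{x ∈ range (n * m) | blockPair n m x = ((i : ℕ), (j : ℕ))}

theorem staircase_transpose : (staircase n m).transpose = staircase m n := by
  ext j i
  simp only [Matrix.transpose_apply, staircase, blockPair, Prod.ext_iff, mul_comm n m, and_comm]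

theorem card_filter_div_eq {i : ℕ} (hi : i < n) (hm : 0 < m) :
    #{x ∈ range (n * m) | x / m = i} = m := by
  have hle : i * m + m ≤ n * m := by nlinarith
  have : {x ∈ range (n * m) | x / m = i} = Ico (i * m) (i * m + m) := by
    ext x
    simp only [mem_filter, mem_range, mem_Ico, Nat.div_eq_iff hm]
    omega
  rw [this, Nat.card_Ico]
  omega

theorem sum_staircase_row (hm : 0 < m) (i : Fin n) : ∑ j, staircase n m i j = m := by
  calc ∑ j, staircase n m i j
        = ∑ j ∈ range m, #{x ∈ {x ∈ range (n * m) | x / m = i} | x / n = j} := by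
        rw [← Fin.sum_univ_eq_sum_range]
        simp only [staircase, blockPair, Prod.ext_iff, filter_filter]
    _ = #{x ∈ range (n * m) | x / m = i} := (card_eq_sum_card_fiberwise fun x hx =>
        mem_range.2 (Nat.div_lt_of_lt_mul (mem_range.1 (mem_filter.1 hx).1))).symm
    _ = m := card_filter_div_eq i.2 hm

theorem ds_staircase (hn : 0 < n) (hm : 0 < m) :
    DS n m ((staircase n m).map (Nat.cast : ℕ → ℝ)) := by
  refine ⟨fun i j => Nat.cast_nonneg _, fun j => ?_, fun i => ?_⟩
  · have h := sum_staircase_row hn j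
    rw [← staircase_transpose] at h
    simpa using congrArg (Nat.cast : ℕ → ℝ) h
  · simpa using congrArg (Nat.cast : ℕ → ℝ) (sum_staircase_row hm i)

theorem card_supp_staircase :
    #(supp ((staircase n m).map (Nat.cast : ℕ → ℝ))) =
      #((range (n * m)).image (blockPair n m)) := by
  refine card_bij (fun p _ => ((p.1 : ℕ), (p.2 : ℕ))) ?_ ?_ ?_
  · rintro ⟨i, j⟩ hp
    simp only [supp, mem_filter, mem_univ, true_and, Matrix.map_apply, staircase,
      Nat.cast_ne_zero, card_ne_zero] at hp
    obtain ⟨x, hx⟩ := hp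
    exact mem_image.2 ⟨x, (mem_filter.1 hx).1, (mem_filter.1 hx).2⟩
  · rintro ⟨i, j⟩ _ ⟨i', j'⟩ _ h
    simp only [Prod.ext_iff, Fin.ext_iff] at h ⊢
    exact h
  · rintro _ hb
    obtain ⟨x, hx, rfl⟩ := mem_image.1 hb
    have hx' : x < n * m := mem_range.1 hx
    refine ⟨(⟨x / m, Nat.div_lt_of_lt_mul (by rwa [mul_comm])⟩,
      ⟨x / n, Nat.div_lt_of_lt_mul hx'⟩), ?_, rfl⟩
    simp only [supp, mem_filter, mem_univ, true_and, Matrix.map_apply, staircase,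
      Nat.cast_ne_zero, card_ne_zero]
    exact ⟨x, mem_filter.2 ⟨hx, rfl⟩⟩

end Staircase

theorem stmt2 (n m : ℕ) (hn : 1 < n) (hnm : n ≤ m) :
    S n m = n + m - Nat.gcd n m := by
  have hn0 : 0 < n := by omega
  have hm0 : 0 < m := by omega
  have hW :
      n + m - n.gcd m ∈ {k | ∃ A : Matrix (Fin n) (Fin m) ℝ, DS n m A ∧ #(supp A) = k} :=
    ⟨_, ds_staircase hn0 hm0, card_supp_staircase.trans (card_image_blockPair_range hn0 hm0)⟩
  unfold S
  refine le_antisymm (Nat.sInf_le hW) (le_csInf ⟨_, hW⟩ ?_)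
  rintro k ⟨A, hA, rfl⟩
  exact hA.le_card_supp hn0
end

section
/- A matrix M ∈ M(n,m) is extremal if and only if its bipartite graph G(M) — with vertex set the disjoint union of rows and columns, and an edge between row i and column j whenever M i j > 0 — contains no cycle. -/
open Finset

def graphOf {n m : ℕ} (M : Matrix (Fin n) (Fin m) ℝ) : SimpleGraph (Fin n ⊕ Fin m) where
  Adj u v := match u, v with
    | Sum.inl i, Sum.inr j => 0 < M i j
    | Sum.inr j, Sum.inl i => 0 < M i j
    | _, _ => False
  symm := ⟨by intro u v h; cases u <;> cases v <;> simp_all⟩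
  loopless := ⟨by intro u h; cases u <;> simp_all⟩

/-!
A matrix `M ∈ M(n,m)` is extremal iff no nonzero matrix `C` with zero line sums is supported
inside the support of `M`: otherwise `M = ½ (M + εC) + ½ (M - εC)` for small `ε > 0`.
A cycle of `G(M)` carries such a `C`, with entries `±1` alternating along the cycle.
Conversely, if `G(M)` is a forest, every edge `(i, j)` is a bridge; pairing `C` with the
indicator of the side of the bridge containing row `i` picks out exactly `C i j`, while the
zero line sums force the pairing to vanish.
-/

open SimpleGraph Sum

variable {n m : ℕ}

lemma supp_subset_supp_iff {A B : Matrix (Fin n) (Fin m) ℝ} :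
    supp A ⊆ supp B ↔ ∀ i j, A i j ≠ 0 → B i j ≠ 0 := by
  simp [supp, Finset.subset_iff]

@[simp]
lemma graphOf_adj_inl_inr {M : Matrix (Fin n) (Fin m) ℝ} {i : Fin n} {j : Fin m} :
    (graphOf M).Adj (inl i) (inr j) ↔ 0 < M i j := .rfl

def HasZeroLineSums (C : Matrix (Fin n) (Fin m) ℝ) : Prop :=
  (∀ i, ∑ j, C i j = 0) ∧ (∀ j, ∑ i, C i j = 0)

lemma DS.hasZeroLineSums_sub {A B : Matrix (Fin n) (Fin m) ℝ} (hA : DS n m A) (hB : DS n m B) :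
    HasZeroLineSums (A - B) :=
  ⟨fun i => by simp [Finset.sum_sub_distrib, hA.2.2 i, hB.2.2 i],
    fun j => by simp [Finset.sum_sub_distrib, hA.2.1 j, hB.2.1 j]⟩

lemma DS.add_smul {M C : Matrix (Fin n) (Fin m) ℝ} {ε : ℝ} (hM : DS n m M)
    (hC : HasZeroLineSums C) (hle : ∀ i j, |ε * C i j| ≤ M i j) : DS n m (M + ε • C) := by
  refine ⟨fun i j => ?_, fun j => ?_, fun i => ?_⟩
  · simp only [Matrix.add_apply, Matrix.smul_apply, smul_eq_mul]
    linarith [neg_le_of_abs_le (hle i j)]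
  · simp [Finset.sum_add_distrib, ← Finset.mul_sum, hM.2.1 j, hC.2 j]
  · simp [Finset.sum_add_distrib, ← Finset.mul_sum, hM.2.2 i, hC.1 i]

lemma HasZeroLineSums.sum_mul_sub_eq_zero {C : Matrix (Fin n) (Fin m) ℝ} (hC : HasZeroLineSums C)
    (x : Fin n → ℝ) (y : Fin m → ℝ) :
    ∑ p : Fin n × Fin m, C p.1 p.2 * (x p.1 - y p.2) = 0 := by
  simp only [mul_sub, Finset.sum_sub_distrib, Fintype.sum_prod_type]
  rw [Finset.sum_comm (f := fun i j => C i j * y j)]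
  simp [← Finset.sum_mul, hC.1, hC.2]

lemma exists_pos_mul_abs_le {ι : Type*} [Finite ι] {f g : ι → ℝ} (hf : ∀ i, 0 ≤ f i)
    (hg : ∀ i, g i ≠ 0 → f i ≠ 0) : ∃ ε > 0, ∀ i, ε * |g i| ≤ f i := by
  have hev : ∀ i, ∀ᶠ ε in nhds (0 : ℝ), ε * |g i| ≤ f i := by
    intro i
    by_cases hgi : g i = 0
    · simp [hgi, hf i]
    · exact ((continuous_mul_const |g i|).tendsto' 0 0 (zero_mul _)).eventually
        (ge_mem_nhds ((hf i).lt_of_ne (hg i hgi).symm))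
  obtain ⟨ε, hε, hpos⟩ := ((Filter.eventually_all.2 hev).filter_mono nhdsWithin_le_nhds
    |>.and (self_mem_nhdsWithin (s := Set.Ioi 0))).exists
  exact ⟨ε, hpos, hε⟩

lemma IsExtremal.eq_zero_of_hasZeroLineSums {M C : Matrix (Fin n) (Fin m) ℝ} (hext : IsExtremal M)
    (hC : HasZeroLineSums C) (hsupp : supp C ⊆ supp M) : C = 0 := by
  have hM := hext.1
  obtain ⟨ε, hε, hle⟩ := exists_pos_mul_abs_le (f := fun p : Fin n × Fin m => M p.1 p.2)
    (g := fun p => C p.1 p.2) (fun p => hM.1 p.1 p.2)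
    (fun p => supp_subset_supp_iff.1 hsupp p.1 p.2)
  have hplus : DS n m (M + ε • C) :=
    hM.add_smul hC fun i j => by simpa [abs_mul, abs_of_pos hε] using hle (i, j)
  have hminus : DS n m (M + (-ε) • C) :=
    hM.add_smul hC fun i j => by simpa [abs_mul, abs_of_pos hε] using hle (i, j)
  have hsplit : M = (1 / 2 : ℝ) • (M + ε • C) + (1 - 1 / 2 : ℝ) • (M + (-ε) • C) := by
    ext i j
    simp only [Matrix.add_apply, Matrix.smul_apply, smul_eq_mul]
    ring
  have := (hext.2 _ _ _ hplus hminus (by norm_num) (by norm_num) hsplit).1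
  simpa [hε.ne'] using this

lemma isExtremal_of_forall_hasZeroLineSums {M : Matrix (Fin n) (Fin m) ℝ} (hM : DS n m M)
    (h : ∀ C, HasZeroLineSums C → supp C ⊆ supp M → C = 0) : IsExtremal M := by
  refine ⟨hM, fun A B t hA hB ht ht1 hMAB => ?_⟩
  have hentry : ∀ i j, M i j = t * A i j + (1 - t) * B i j := fun i j => by
    simpa using congrFun (congrFun hMAB i) j
  have hsupp : supp (A - M) ⊆ supp M := by
    refine supp_subset_supp_iff.2 fun i j hAM hMij => hAM ?_
    have : A i j = 0 := by nlinarith [hentry i j, hA.1 i j, hB.1 i j]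
    simp [this, hMij]
  have hAM : A = M := sub_eq_zero.1 (h _ (hA.hasZeroLineSums_sub hM) hsupp)
  refine ⟨hAM, ?_⟩
  ext i j
  have := hentry i j
  rw [hAM] at this
  have h1t : 1 - t ≠ 0 := by linarith
  exact mul_left_cancel₀ h1t (by linarith)

lemma HasZeroLineSums.eq_zero_of_isAcyclic {M C : Matrix (Fin n) (Fin m) ℝ}
    (hC : HasZeroLineSums C) (hsupp : supp C ⊆ supp M) (hM : ∀ i j, 0 ≤ M i j)
    (hac : (graphOf M).IsAcyclic) : C = 0 := by
  classical
  have hadj : ∀ i j, C i j ≠ 0 → (graphOf M).Adj (inl i) (inr j) := fun i j hCij =>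
    (hM i j).lt_of_ne (supp_subset_supp_iff.1 hsupp i j hCij).symm
  ext i j
  rw [Matrix.zero_apply]
  by_contra hCij
  set G := (graphOf M).deleteEdges {s(inl i, inr j)}
  have hbridge : ¬ G.Reachable (inl i) (inr j) :=
    isBridge_iff.1 (isAcyclic_iff_forall_adj_isBridge.1 hac (hadj i j hCij))
  let χ : Fin n ⊕ Fin m → ℝ := fun v =>
    if G.connectedComponentMk v = G.connectedComponentMk (inl i) then 1 else 0
  have hχ : ∀ p : Fin n × Fin m, p ≠ (i, j) →
      C p.1 p.2 * (χ (inl p.1) - χ (inr p.2)) = 0 := by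
    rintro ⟨i', j'⟩ hne
    by_cases hC' : C i' j' = 0
    · simp [hC']
    · have : G.Adj (inl i') (inr j') := by
        refine deleteEdges_adj.2 ⟨hadj i' j' hC', ?_⟩
        simpa using hne
      simp only [χ, ConnectedComponent.connectedComponentMk_eq_of_adj this, sub_self, mul_zero]
  have hsum : ∑ p : Fin n × Fin m, C p.1 p.2 * (χ (inl p.1) - χ (inr p.2)) = 0 :=
    hC.sum_mul_sub_eq_zero (fun i' => χ (inl i')) (fun j' => χ (inr j'))
  have hχi : χ (inl i) = 1 := if_pos rfl
  have hχj : χ (inr j) = 0 := if_neg fun h => hbridge (ConnectedComponent.eq.1 h).symm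
  rw [Fintype.sum_eq_single (i, j) hχ, hχi, hχj, sub_zero, mul_one] at hsum
  exact hCij hsum

def stepMatrix (u w : Fin n ⊕ Fin m) : Matrix (Fin n) (Fin m) ℝ := fun i j =>
  if (u, w) = (inl i, inr j) then 1 else if (u, w) = (inr j, inl i) then -1 else 0

lemma stepMatrix_apply_eq_zero {u w : Fin n ⊕ Fin m} {i : Fin n} {j : Fin m}
    (h : s(u, w) ≠ s(inl i, inr j)) : stepMatrix u w i j = 0 := by
  simp only [stepMatrix, Prod.mk.injEq]
  split_ifs with h1 h2
  · exact absurd (by rw [h1.1, h1.2]) h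
  · exact absurd (by rw [h2.1, h2.2, Sym2.eq_swap]) h
  · rfl

def walkMatrix (M : Matrix (Fin n) (Fin m) ℝ) :
    ∀ {u v : Fin n ⊕ Fin m}, (graphOf M).Walk u v → Matrix (Fin n) (Fin m) ℝ
  | _, _, .nil => 0
  | _, _, .cons (u := u) (v := w) _ p => stepMatrix u w + walkMatrix M p

variable {M : Matrix (Fin n) (Fin m) ℝ}

lemma sum_stepMatrix_row {u w : Fin n ⊕ Fin m} (h : (graphOf M).Adj u w) (i : Fin n) :
    ∑ j, stepMatrix u w i j = (if u = inl i then 1 else 0) - (if w = inl i then 1 else 0) := by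
  rcases u with a | b <;> rcases w with a' | b'
  · exact h.elim
  · simp [stepMatrix, ite_and]
  · simp [stepMatrix, ite_and, neg_ite]
  · exact h.elim

lemma sum_stepMatrix_col {u w : Fin n ⊕ Fin m} (h : (graphOf M).Adj u w) (j : Fin m) :
    ∑ i, stepMatrix u w i j = (if w = inr j then 1 else 0) - (if u = inr j then 1 else 0) := by
  rcases u with a | b <;> rcases w with a' | b'
  · exact h.elim
  · simp [stepMatrix, ite_and]
  · simp [stepMatrix, ite_and, neg_ite]
  · exact h.elim

lemma sum_walkMatrix_row {u v : Fin n ⊕ Fin m} (p : (graphOf M).Walk u v) (i : Fin n) :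
    ∑ j, walkMatrix M p i j = (if u = inl i then 1 else 0) - (if v = inl i then 1 else 0) := by
  induction p with
  | nil => simp [walkMatrix]
  | cons h p ih =>
    simp only [walkMatrix, Matrix.add_apply, Finset.sum_add_distrib, sum_stepMatrix_row h, ih]
    ring

lemma sum_walkMatrix_col {u v : Fin n ⊕ Fin m} (p : (graphOf M).Walk u v) (j : Fin m) :
    ∑ i, walkMatrix M p i j = (if v = inr j then 1 else 0) - (if u = inr j then 1 else 0) := by
  induction p with
  | nil => simp [walkMatrix]
  | cons h p ih =>
    simp only [walkMatrix, Matrix.add_apply, Finset.sum_add_distrib, sum_stepMatrix_col h, ih]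
    ring

lemma walkMatrix_apply_eq_zero {u v : Fin n ⊕ Fin m} (p : (graphOf M).Walk u v) {i : Fin n}
    {j : Fin m} (he : s(inl i, inr j) ∉ p.edges) : walkMatrix M p i j = 0 := by
  induction p with
  | nil => rfl
  | cons h p ih =>
    simp only [Walk.edges_cons, List.mem_cons, not_or] at he
    simp [walkMatrix, stepMatrix_apply_eq_zero (Ne.symm he.1), ih he.2]

lemma hasZeroLineSums_walkMatrix {v : Fin n ⊕ Fin m} (c : (graphOf M).Walk v v) :
    HasZeroLineSums (walkMatrix M c) :=
  ⟨fun i => by simp [sum_walkMatrix_row], fun j => by simp [sum_walkMatrix_col]⟩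

lemma supp_walkMatrix_subset {u v : Fin n ⊕ Fin m} (p : (graphOf M).Walk u v) :
    supp (walkMatrix M p) ⊆ supp M :=
  supp_subset_supp_iff.2 fun _ _ hne =>
    (graphOf_adj_inl_inr.1 <|
      p.adj_of_mem_edges (not_not.1 (mt (walkMatrix_apply_eq_zero p) hne))).ne'

lemma SimpleGraph.Walk.IsCycle.walkMatrix_ne_zero {v : Fin n ⊕ Fin m} {c : (graphOf M).Walk v v}
    (hc : c.IsCycle) : walkMatrix M c ≠ 0 := by
  cases c with
  | nil => exact absurd hc Walk.not_isCycle_nil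
  | @cons _ w _ h p =>
    have hfirst := (List.nodup_cons.1 (by simpa using hc.edges_nodup)).1
    intro h0
    rcases v with i | j <;> rcases w with i' | j'
    · exact h.elim
    · have := congrFun (congrFun h0 i) j'
      simp [walkMatrix, stepMatrix, walkMatrix_apply_eq_zero p hfirst] at this
    · have := congrFun (congrFun h0 i') j
      simp [walkMatrix, stepMatrix, walkMatrix_apply_eq_zero p (by rwa [Sym2.eq_swap])] at this
    · exact h.elim

theorem stmt10 (n m : ℕ) (M : Matrix (Fin n) (Fin m) ℝ) (hM : DS n m M) :
    IsExtremal M ↔ (graphOf M).IsAcyclic := by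
  refine ⟨fun hext v c hc => hc.walkMatrix_ne_zero ?_, fun hac => ?_⟩
  · exact hext.eq_zero_of_hasZeroLineSums (hasZeroLineSums_walkMatrix c) (supp_walkMatrix_subset c)
  · exact isExtremal_of_forall_hasZeroLineSums hM fun C hC hsupp =>
      hC.eq_zero_of_isAcyclic hsupp hM.1 hac
end

section
/- The two 4 × 5 matrices A with rows (1,4,0,0,0),(0,0,4,0,1),(3,0,0,2,0),(0,0,0,2,3) and B with rows (4,0,0,0,1),(0,4,0,0,1),(0,0,4,0,1),(0,0,0,4,1) both lie in M(4,5) and both have support of minimum cardinality S(4,5) = 8, yet A cannot be obtained from B by permuting rows and columns. -/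
open Finset

noncomputable def A : Matrix (Fin 4) (Fin 5) ℝ :=
  !![1,4,0,0,0; 0,0,4,0,1; 3,0,0,2,0; 0,0,0,2,3]

noncomputable def B : Matrix (Fin 4) (Fin 5) ℝ :=
  !![4,0,0,0,1; 0,4,0,0,1; 0,0,4,0,1; 0,0,0,4,1]

/-!
An entry of a matrix in `M(n,m)` is at most its column sum `n`, so when `n < m` no row can carry
its sum `m` on a single entry: every row has at least two nonzero entries and the support has at
least `2n` elements, which for `(4,5)` is the `8` attained by `A`. Permuting rows and columns does
not change the set of entries, and `A` has an entry `3` while `B` has none.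
-/

lemma card_supp_eq_sum {n m : ℕ} (M : Matrix (Fin n) (Fin m) ℝ) :
    #(supp M) = ∑ i, #{j | M i j ≠ 0} := by
  rw [supp, Finset.card_filter, Fintype.sum_prod_type]
  simp only [Finset.card_filter]

namespace DS

variable {n m : ℕ} {M : Matrix (Fin n) (Fin m) ℝ}

lemma le_col_sum (hM : DS n m M) (i : Fin n) (j : Fin m) : M i j ≤ n :=
  hM.2.1 j ▸ Finset.single_le_sum (fun i' _ => hM.1 i' j) (Finset.mem_univ i)

lemma row_sum_le_card_mul (hM : DS n m M) (i : Fin n) :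
    (m : ℝ) ≤ #{j | M i j ≠ 0} * n :=
  calc (m : ℝ) = ∑ j ∈ {j | M i j ≠ 0}, M i j := by rw [Finset.sum_filter_ne_zero, hM.2.2 i]
    _ ≤ ∑ _j ∈ {j | M i j ≠ 0}, (n : ℝ) := Finset.sum_le_sum fun j _ => hM.le_col_sum i j
    _ = #{j | M i j ≠ 0} * n := by rw [Finset.sum_const, nsmul_eq_mul]

lemma two_le_card_row_supp (hnm : n < m) (hM : DS n m M) (i : Fin n) :
    2 ≤ #{j | M i j ≠ 0} := by
  by_contra! hrow
  have hcard : (#{j | M i j ≠ 0} : ℝ) ≤ 1 := by exact_mod_cast Nat.le_of_lt_succ hrow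
  have hmn : (m : ℝ) ≤ n := by
    nlinarith [hM.row_sum_le_card_mul i, (n.cast_nonneg : (0 : ℝ) ≤ n)]
  exact (Nat.cast_le.mp hmn).not_gt hnm

lemma two_mul_le_card_supp (hnm : n < m) (hM : DS n m M) : 2 * n ≤ #(supp M) :=
  calc 2 * n = ∑ _i : Fin n, 2 := by simp [mul_comm]
    _ ≤ ∑ i, #{j | M i j ≠ 0} := Finset.sum_le_sum fun i _ => hM.two_le_card_row_supp hnm i
    _ = #(supp M) := (card_supp_eq_sum M).symm

end DS

lemma S_eq_card_supp {n m : ℕ} {M : Matrix (Fin n) (Fin m) ℝ} (hM : DS n m M)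
    (hmin : ∀ M' : Matrix (Fin n) (Fin m) ℝ, DS n m M' → #(supp M) ≤ #(supp M')) :
    S n m = #(supp M) :=
  le_antisymm (Nat.sInf_le ⟨M, hM, rfl⟩)
    (le_csInf ⟨_, M, hM, rfl⟩ fun _ ⟨M', hM', hk⟩ => hk ▸ hmin M' hM')

lemma ds_A : DS 4 5 A := by
  refine ⟨fun i j => ?_, fun j => ?_, fun i => ?_⟩
  · fin_cases i <;> fin_cases j <;> norm_num [A]
  · fin_cases j <;> norm_num [A, Fin.sum_univ_succ]
  · fin_cases i <;> norm_num [A, Fin.sum_univ_succ]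

lemma ds_B : DS 4 5 B := by
  refine ⟨fun i j => ?_, fun j => ?_, fun i => ?_⟩
  · fin_cases i <;> fin_cases j <;> norm_num [B]
  · fin_cases j <;> norm_num [B, Fin.sum_univ_succ]
  · fin_cases i <;> norm_num [B, Fin.sum_univ_succ]

lemma card_supp_A : #(supp A) = 8 := by
  simp [card_supp_eq_sum, Finset.card_filter, A, Fin.sum_univ_succ]

lemma card_supp_B : #(supp B) = 8 := by
  simp [card_supp_eq_sum, Finset.card_filter, B, Fin.sum_univ_succ]

lemma B_ne_three (i : Fin 4) (j : Fin 5) : B i j ≠ 3 := by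
  fin_cases i <;> fin_cases j <;> norm_num [B]

theorem stmt16 : DS 4 5 A ∧ DS 4 5 B ∧ S 4 5 = 8 ∧
    (supp A).card = 8 ∧ (supp B).card = 8 ∧
    ¬ ∃ (σ : Equiv.Perm (Fin 4)) (τ : Equiv.Perm (Fin 5)),
        ∀ i j, A i j = B (σ i) (τ j) := by
  refine ⟨ds_A, ds_B, ?_, card_supp_A, card_supp_B, ?_⟩
  · rw [← card_supp_A]
    exact S_eq_card_supp ds_A fun M hM => card_supp_A ▸ hM.two_mul_le_card_supp (by norm_num)
  · rintro ⟨σ, τ, h⟩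
    exact B_ne_three (σ 2) (τ 0) (h 2 0 ▸ rfl)
end
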